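/- For any function T : 𝒳 × 𝒴 → ℝ on the product of two finite sets, the neural information lower bound I_T(X;Y) := E_{(x,y)~p_{XY}}[T(x,y)] - log(E_{(x,y)~p_X⊗p_Y}[e^{T(x,y)}]) satisfies I_T(X;Y) ≤ I(X;Y). -/
import Mathlib


open Real Finset

/-- Neural (MINE) lower bound: for any critic `T : 𝒳 × 𝒴 → ℝ`,
`E_{p_XY}[T] - log E_{p_X ⊗ p_Y}[e^T] ≤ I(X;Y)` on finite alphabets. -/
theorem mine_lower_bound
    {𝒳 𝒴 : Type*} [Fintype 𝒳] [Fintype 𝒴] [Nonempty 𝒳] [Nonempty 𝒴]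
    (p : 𝒳 → 𝒴 → ℝ)
    (hp0 : ∀ x y, 0 ≤ p x y)
    (hp1 : ∑ x, ∑ y, p x y = 1)
    (pX : 𝒳 → ℝ) (hpX : ∀ x, pX x = ∑ y, p x y)
    (pY : 𝒴 → ℝ) (hpY : ∀ y, pY y = ∑ x, p x y)
    (hpXpos : ∀ x, 0 < pX x) (hpYpos : ∀ y, 0 < pY y)
    (T : 𝒳 × 𝒴 → ℝ) :
    (∑ x, ∑ y, p x y * T (x, y))
        - Real.log (∑ x, ∑ y, pX x * pY y * Real.exp (T (x, y)))
      ≤ ∑ x, ∑ y, p x y * Real.log (p x y / (pX x * pY y)) := by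
  set Z : ℝ := ∑ x, ∑ y, pX x * pY y * Real.exp (T (x, y)) with hZ
  have hZpos : 0 < Z := by
    apply Finset.sum_pos (fun x _ => Finset.sum_pos (fun y _ => ?_) univ_nonempty)
      univ_nonempty
    exact mul_pos (mul_pos (hpXpos x) (hpYpos y)) (Real.exp_pos _)
  have key : ∀ x y,
      p x y * T (x, y) - p x y * Real.log (p x y / (pX x * pY y))
        - p x y * Real.log Z
      ≤ pX x * pY y * Real.exp (T (x, y)) / Z - p x y := by
    intro x y
    rcases eq_or_lt_of_le (hp0 x y) with h0 | hpos
    · rw [← h0]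
      have : (0:ℝ) ≤ pX x * pY y * Real.exp (T (x, y)) / Z :=
        div_nonneg (mul_pos (mul_pos (hpXpos x) (hpYpos y)) (Real.exp_pos _)).le hZpos.le
      simpa using this
    · have hq : 0 < pX x * pY y := mul_pos (hpXpos x) (hpYpos y)
      have ha : 0 < pX x * pY y * Real.exp (T (x, y)) / (Z * p x y) :=
        div_pos (mul_pos hq (Real.exp_pos _)) (mul_pos hZpos hpos)
      have hlog := Real.log_le_sub_one_of_pos ha
      have hexpand : Real.log (pX x * pY y * Real.exp (T (x, y)) / (Z * p x y))
          = T (x, y) - Real.log (p x y / (pX x * pY y)) - Real.log Z := by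
        rw [Real.log_div (by positivity) (by positivity),
            Real.log_mul (by positivity) (Real.exp_ne_zero _),
            Real.log_exp, Real.log_mul (ne_of_gt hZpos) (ne_of_gt hpos),
            Real.log_div (ne_of_gt hpos) (ne_of_gt hq)]
        ring
      rw [hexpand] at hlog
      have := mul_le_mul_of_nonneg_left hlog (le_of_lt hpos)
      calc p x y * T (x, y) - p x y * Real.log (p x y / (pX x * pY y))
            - p x y * Real.log Z
          = p x y * (T (x, y) - Real.log (p x y / (pX x * pY y)) - Real.log Z) := by ring
        _ ≤ p x y * (pX x * pY y * Real.exp (T (x, y)) / (Z * p x y) - 1) := this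
        _ = pX x * pY y * Real.exp (T (x, y)) / Z - p x y := by
            field_simp
  have hsum : ∑ x, ∑ y, (p x y * T (x, y)
        - p x y * Real.log (p x y / (pX x * pY y)) - p x y * Real.log Z)
      ≤ ∑ x, ∑ y, (pX x * pY y * Real.exp (T (x, y)) / Z - p x y) :=
    Finset.sum_le_sum fun x _ => Finset.sum_le_sum fun y _ => key x y
  have hLHS : ∑ x, ∑ y, (p x y * T (x, y)
        - p x y * Real.log (p x y / (pX x * pY y)) - p x y * Real.log Z)
      = (∑ x, ∑ y, p x y * T (x, y))
        - (∑ x, ∑ y, p x y * Real.log (p x y / (pX x * pY y)))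
        - Real.log Z := by
    simp only [Finset.sum_sub_distrib, ← Finset.sum_mul]
    rw [hp1]; ring
  have hRHS : ∑ x, ∑ y, (pX x * pY y * Real.exp (T (x, y)) / Z - p x y) = 0 := by
    simp only [Finset.sum_sub_distrib, ← Finset.sum_div]
    rw [hp1, div_self (ne_of_gt hZpos)]
    ring
  rw [hLHS, hRHS] at hsum
  linarith
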